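/- arXiv:1501.06338 — 2 statements merged into one kernel-verified Lean document; each statement's English description precedes it below -/
import Mathlib

section
/- Let H = H⁺ ⊕ H⁻ be a ℤ₂-graded finite-dimensional complex inner product space and let D : H → H be a selfadjoint operator that is odd for the grading, i.e. D = [[0, D₋],[D₊, 0]] with D₋ = D₊*. Then for every t > 0, the supertrace of e^{-tD²} is independent of t and equals the index of D₊: Tr(e^{-tD₊*D₊}) - Tr(e^{-tD₊D₊*}) = dim ker D₊ - dim ker D₊*. -/
open NormedSpace ContinuousLinearMap

section Aux

variable {Hp Hm : Type*} [NormedAddCommGroup Hp] [InnerProductSpace ℂ Hp]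
    [NormedAddCommGroup Hm] [InnerProductSpace ℂ Hm]
    [FiniteDimensional ℂ Hp] [FiniteDimensional ℂ Hm]

lemma clm_coe_pow {E : Type*} [NormedAddCommGroup E] [NormedSpace ℂ E]
    (A : E →L[ℂ] E) (n : ℕ) :
    ((A ^ n : E →L[ℂ] E) : E →ₗ[ℂ] E) = (A : E →ₗ[ℂ] E) ^ n :=
  map_pow (ContinuousLinearMap.toLinearMapRingHom) A n

omit [FiniteDimensional ℂ Hp] [FiniteDimensional ℂ Hm] in
/-- `(b ∘ a)^(n+1) = b ∘ (a ∘ b)^n ∘ a`. -/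
lemma comp_pow_succ (a : Hp →ₗ[ℂ] Hm) (b : Hm →ₗ[ℂ] Hp) (n : ℕ) :
    (b ∘ₗ a) ^ (n + 1) = b ∘ₗ (((a ∘ₗ b) ^ n) ∘ₗ a) := by
  induction n with
  | zero => rw [zero_add, pow_one, pow_zero, Module.End.one_eq_id, LinearMap.id_comp]
  | succ n ih =>
      rw [pow_succ]
      show LinearMap.comp _ _ = _
      rw [ih, pow_succ]
      ext x
      simp [LinearMap.comp_apply]

lemma trace_pow_comm (a : Hp →ₗ[ℂ] Hm) (b : Hm →ₗ[ℂ] Hp) (n : ℕ) :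
    LinearMap.trace ℂ Hp ((b ∘ₗ a) ^ (n + 1)) =
      LinearMap.trace ℂ Hm ((a ∘ₗ b) ^ (n + 1)) := by
  rw [comp_pow_succ, LinearMap.trace_comp_comm', pow_succ]
  congr 1

/-- trace of exp as a tsum. -/
lemma trace_exp_eq_tsum {E : Type*} [NormedAddCommGroup E] [InnerProductSpace ℂ E]
    [FiniteDimensional ℂ E] (A : E →L[ℂ] E) :
    LinearMap.trace ℂ E (exp A).toLinearMap =
      ∑' n : ℕ, ((n.factorial : ℂ))⁻¹ * LinearMap.trace ℂ E (A.toLinearMap ^ n) := by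
  let φ : (E →L[ℂ] E) →ₗ[ℂ] ℂ :=
    (LinearMap.trace ℂ E).comp (ContinuousLinearMap.coeLM ℂ)
  let φ' : (E →L[ℂ] E) →L[ℂ] ℂ := LinearMap.toContinuousLinearMap φ
  have hφ : ∀ f : E →L[ℂ] E, φ' f = LinearMap.trace ℂ E f.toLinearMap := fun _ => rfl
  have hsum : Summable fun n : ℕ => ((n.factorial : ℂ))⁻¹ • A ^ n :=
    NormedSpace.expSeries_summable' A
  calc LinearMap.trace ℂ E (exp A).toLinearMap
      = φ' (∑' n : ℕ, ((n.factorial : ℂ))⁻¹ • A ^ n) := by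
        rw [hφ]; congr 1; rw [NormedSpace.exp_eq_tsum (𝕂 := ℂ)]
    _ = ∑' n : ℕ, φ' (((n.factorial : ℂ))⁻¹ • A ^ n) := φ'.map_tsum hsum
    _ = ∑' n : ℕ, ((n.factorial : ℂ))⁻¹ * LinearMap.trace ℂ E (A.toLinearMap ^ n) := by
        refine tsum_congr fun n => ?_
        rw [map_smul, hφ, smul_eq_mul, clm_coe_pow]

lemma trace_term_summable {E : Type*} [NormedAddCommGroup E] [InnerProductSpace ℂ E]
    [FiniteDimensional ℂ E] (A : E →L[ℂ] E) :
    Summable fun n : ℕ =>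
      ((n.factorial : ℂ))⁻¹ * LinearMap.trace ℂ E (A.toLinearMap ^ n) := by
  let φ : (E →L[ℂ] E) →ₗ[ℂ] ℂ :=
    (LinearMap.trace ℂ E).comp (ContinuousLinearMap.coeLM ℂ)
  let φ' : (E →L[ℂ] E) →L[ℂ] ℂ := LinearMap.toContinuousLinearMap φ
  have hφ : ∀ f : E →L[ℂ] E, φ' f = LinearMap.trace ℂ E f.toLinearMap := fun _ => rfl
  have hsum : Summable fun n : ℕ => ((n.factorial : ℂ))⁻¹ • A ^ n :=
    NormedSpace.expSeries_summable' A
  have := hsum.map φ' φ'.continuous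
  refine this.congr fun n => ?_
  simp only [Function.comp]
  rw [map_smul, hφ, smul_eq_mul, clm_coe_pow]

end Aux

/-- McKean–Singer formula in the finite-dimensional setting: for an odd selfadjoint
operator `D = [[0, D₊*],[D₊, 0]]` on a ℤ₂-graded finite-dimensional Hilbert space, the
supertrace of `e^{-tD²}` is independent of `t > 0` and equals the index of `D₊`. -/
theorem mcKean_singer_finiteDimensional
    {Hp Hm : Type*} [NormedAddCommGroup Hp] [InnerProductSpace ℂ Hp]
    [NormedAddCommGroup Hm] [InnerProductSpace ℂ Hm]
    [FiniteDimensional ℂ Hp] [FiniteDimensional ℂ Hm]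
    (Dplus : Hp →L[ℂ] Hm) (t : ℝ) (ht : 0 < t) :
    LinearMap.trace ℂ Hp
        (NormedSpace.exp ((-(t : ℂ)) • ((ContinuousLinearMap.adjoint Dplus) ∘L Dplus))).toLinearMap
      - LinearMap.trace ℂ Hm
          (NormedSpace.exp ((-(t : ℂ)) • (Dplus ∘L (ContinuousLinearMap.adjoint Dplus)))).toLinearMap
      = (Module.finrank ℂ (LinearMap.ker Dplus.toLinearMap) : ℂ)
          - (Module.finrank ℂ (LinearMap.ker (ContinuousLinearMap.adjoint Dplus).toLinearMap) : ℂ) := by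
  classical
  set a : Hp →ₗ[ℂ] Hm := Dplus.toLinearMap with ha
  set b : Hm →ₗ[ℂ] Hp := (ContinuousLinearMap.adjoint Dplus).toLinearMap with hb
  rw [trace_exp_eq_tsum, trace_exp_eq_tsum]
  have hcoeP : ∀ n : ℕ,
      ((((-(t : ℂ)) • ((ContinuousLinearMap.adjoint Dplus) ∘L Dplus)).toLinearMap) ^ n)
        = (-(t : ℂ)) ^ n • ((b ∘ₗ a) ^ n) := by
    intro n
    rw [ContinuousLinearMap.coe_smul, smul_pow]
    rfl
  have hcoeM : ∀ n : ℕ,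
      ((((-(t : ℂ)) • (Dplus ∘L (ContinuousLinearMap.adjoint Dplus))).toLinearMap) ^ n)
        = (-(t : ℂ)) ^ n • ((a ∘ₗ b) ^ n) := by
    intro n
    rw [ContinuousLinearMap.coe_smul, smul_pow]
    rfl
  have hsumP := trace_term_summable ((-(t : ℂ)) • ((ContinuousLinearMap.adjoint Dplus) ∘L Dplus))
  have hsumM := trace_term_summable ((-(t : ℂ)) • (Dplus ∘L (ContinuousLinearMap.adjoint Dplus)))
  rw [← Summable.tsum_sub hsumP hsumM]
  have hterm : ∀ n : ℕ,
      (((n.factorial : ℂ))⁻¹ * LinearMap.trace ℂ Hp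
          ((((-(t : ℂ)) • ((ContinuousLinearMap.adjoint Dplus) ∘L Dplus)).toLinearMap) ^ n)
        - ((n.factorial : ℂ))⁻¹ * LinearMap.trace ℂ Hm
          ((((-(t : ℂ)) • (Dplus ∘L (ContinuousLinearMap.adjoint Dplus))).toLinearMap) ^ n))
      = if n = 0 then (Module.finrank ℂ Hp : ℂ) - (Module.finrank ℂ Hm : ℂ) else 0 := by
    intro n
    rw [hcoeP, hcoeM, map_smul, map_smul]
    rcases n with _ | m
    · simp [LinearMap.trace_one]
    · have := trace_pow_comm a b m
      simp only [Nat.succ_ne_zero, if_false, smul_eq_mul, this]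
      ring
  rw [tsum_congr hterm, tsum_eq_single 0 (fun n hn => by simp [hn]), if_pos rfl]
  have hkerAdj : LinearMap.ker (ContinuousLinearMap.adjoint Dplus).toLinearMap
      = (LinearMap.range Dplus.toLinearMap)ᗮ := by
    ext x
    simp only [LinearMap.mem_ker, Submodule.mem_orthogonal, ContinuousLinearMap.coe_coe]
    constructor
    · intro hx u hu
      obtain ⟨y, rfl⟩ := hu
      rw [ContinuousLinearMap.coe_coe, ← ContinuousLinearMap.adjoint_inner_right]
      simp [hx]
    · intro hx
      rw [← inner_self_eq_zero (𝕜 := ℂ) (x := ContinuousLinearMap.adjoint Dplus x)]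
      rw [ContinuousLinearMap.adjoint_inner_right]
      exact hx _ ⟨_, rfl⟩
  have h1 : Module.finrank ℂ (LinearMap.range Dplus.toLinearMap) + Module.finrank ℂ (LinearMap.ker Dplus.toLinearMap)
      = Module.finrank ℂ Hp := LinearMap.finrank_range_add_finrank_ker (Dplus : Hp →ₗ[ℂ] Hm)
  have h2 : Module.finrank ℂ (LinearMap.range Dplus.toLinearMap)
        + Module.finrank ℂ (LinearMap.ker (ContinuousLinearMap.adjoint Dplus).toLinearMap)
      = Module.finrank ℂ Hm := by
    rw [hkerAdj]
    exact Submodule.finrank_add_finrank_orthogonal _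
  have h1' : (Module.finrank ℂ Hp : ℂ)
      = (Module.finrank ℂ (LinearMap.range Dplus.toLinearMap) : ℂ)
        + (Module.finrank ℂ (LinearMap.ker Dplus.toLinearMap) : ℂ) := by
    exact_mod_cast congrArg (Nat.cast (R := ℂ)) h1.symm
  have h2' : (Module.finrank ℂ Hm : ℂ)
      = (Module.finrank ℂ (LinearMap.range Dplus.toLinearMap) : ℂ)
        + (Module.finrank ℂ (LinearMap.ker (ContinuousLinearMap.adjoint Dplus).toLinearMap) : ℂ) := by
    exact_mod_cast congrArg (Nat.cast (R := ℂ)) h2.symm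
  rw [h1', h2']
  ring
end

section
/- Let φ be holomorphic on the half-plane Re(z) > α and suppose φ extends meromorphically to Re(z) > γ for some γ < α with finitely many simple poles d_1 > d_2 > ... > d_m in (γ, α], residues a_1, ..., a_m, and suppose φ(z) = O(|z|^{-r}) for some r > 1 uniformly in the strip γ ≤ Re(z) ≤ c for some c > α, with φ analytic on Re(z) = γ. If f(t) = (1/2πi) ∫_{Re(z)=c} φ(z) t^{-z} dz for t > 0 (the inverse Mellin transform, which converges absolutely), then f(t) = ∑_{j=1}^m a_j t^{-d_j} + O(t^{-γ}) as t → 0⁺. -/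
open MeasureTheory Filter

section MellinAux
open Complex Set

set_option maxHeartbeats 1000000


lemma mellin_line_ne_zero {b : ℝ} (hb : b ≠ 0) (y : ℝ) : (b : ℂ) + y * I ≠ 0 := by
  intro h
  exact hb (by simpa using congrArg Complex.re h)

lemma mellin_integral_inv_line (b : ℝ) (hb : b ≠ 0) (T : ℝ) :
    (∫ y in (-T)..T, ((b : ℂ) + y * I)⁻¹) = 2 * Real.arctan (T / b) := by
  have h0 : ∀ y : ℝ, (b:ℝ)^2 + y^2 ≠ 0 := fun y => by positivity
  have hA : ∀ y : ℝ, HasDerivAt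
      (fun y : ℝ => ((Real.arctan (y / b) : ℝ) : ℂ) - I / 2 * ((Real.log (b^2 + y^2) : ℝ) : ℂ))
      (((b : ℂ) + y * I))⁻¹ y := by
    intro y
    have h1 : HasDerivAt (fun y : ℝ => Real.arctan (y / b)) (b / (b^2 + y^2)) y := by
      have := (Real.hasDerivAt_arctan (y / b)).comp y ((hasDerivAt_id y).div_const b)
      refine this.congr_deriv ?_
      field_simp
    have h2 : HasDerivAt (fun y : ℝ => Real.log (b^2 + y^2)) (2 * y / (b^2 + y^2)) y := by
      have hi : HasDerivAt (fun y : ℝ => b^2 + y^2) (2 * y) y := by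
        simpa using ((hasDerivAt_pow 2 y).const_add (b^2))
      have := (Real.hasDerivAt_log (h0 y)).comp y hi
      refine this.congr_deriv ?_
      ring
    have h1' := h1.ofReal_comp
    have h2' := (h2.ofReal_comp).const_mul (I / 2)
    have h := h1'.sub h2'
    refine h.congr_deriv ?_
    have hs : ((b:ℝ)^2 + y^2 : ℂ) ≠ 0 := by
      norm_cast
      exact h0 y
    refine (eq_inv_of_mul_eq_one_left ?_)
    push_cast
    field_simp
    ring_nf
    simp [Complex.I_sq]
  have hcont : Continuous (fun y : ℝ => ((b : ℂ) + y * I)⁻¹) := by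
    apply Continuous.inv₀
    · continuity
    · exact fun y => mellin_line_ne_zero hb y
  rw [intervalIntegral.integral_eq_sub_of_hasDerivAt (fun y _ => hA y)
    (hcont.intervalIntegrable _ _)]
  rw [show ((-T:ℝ)/b) = -(T/b) by ring, Real.arctan_neg, show ((-T:ℝ))^2 = T^2 by ring]
  push_cast
  ring

lemma mellin_arctan_lim_pos {b : ℝ} (hb : 0 < b) :
    Tendsto (fun T : ℝ => Real.arctan (T / b)) atTop (nhds (Real.pi / 2)) := by
  have h1 : Tendsto (fun T : ℝ => T / b) atTop atTop := tendsto_id.atTop_div_const hb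
  exact (Real.tendsto_arctan_atTop.mono_right nhdsWithin_le_nhds).comp h1

lemma mellin_arctan_lim_neg {b : ℝ} (hb : b < 0) :
    Tendsto (fun T : ℝ => Real.arctan (T / b)) atTop (nhds (-(Real.pi / 2))) := by
  have h1 : Tendsto (fun T : ℝ => T / b) atTop atBot := tendsto_id.atTop_div_const_of_neg hb
  exact (Real.tendsto_arctan_atBot.mono_right nhdsWithin_le_nhds).comp h1


private lemma mellin_setup
    (φ ψ : ℂ → ℂ) (m : ℕ) (d : Fin m → ℝ) (a : Fin m → ℂ)
    (γ c : ℝ) (hγc : γ < c) (hd : ∀ j, γ < d j ∧ d j < c)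
    (hψ : ∀ z : ℂ, γ ≤ z.re → z.re ≤ c → AnalyticAt ℂ ψ z)
    (hφψ : ∀ z : ℂ, γ ≤ z.re → z.re ≤ c → (∀ j, z ≠ (d j : ℂ)) →
      φ z = ψ z + ∑ j, a j / (z - (d j : ℂ)))
    (r : ℝ) (hr : 1 < r) (C : ℝ)
    (hdecay : ∀ z : ℂ, γ ≤ z.re → z.re ≤ c → 1 ≤ |z.im| →
      ‖φ z‖ ≤ C * ‖z‖ ^ (-r)) :
    Integrable (fun y : ℝ => φ ((γ : ℂ) + y * I)) ∧ 0 ≤ C := by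
  have hre : ∀ y : ℝ, ((γ:ℂ) + y * I).re = γ := fun y => by simp
  have him : ∀ y : ℝ, ((γ:ℂ) + y * I).im = y := fun y => by simp
  have hne : ∀ (y : ℝ) (j : Fin m), ((γ:ℂ) + y * I) ≠ (d j : ℂ) := by
    intro y j h
    have := congrArg Complex.re h
    rw [hre] at this
    simp at this
    exact absurd this (hd j).1.ne
  have hC0 : 0 ≤ C := by
    have h := hdecay ((γ:ℂ) + (1:ℝ) * I) (by rw [hre]) (by rw [hre]; exact hγc.le) (by rw [him]; norm_num)
    have hz : (0:ℝ) < ‖(γ:ℂ) + (1:ℝ) * I‖ := by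
      apply norm_pos_iff.mpr
      intro hcon
      have := congrArg Complex.im hcon
      rw [him] at this
      simp at this
    have hp : (0:ℝ) < ‖(γ:ℂ) + (1:ℝ) * I‖ ^ (-r) := Real.rpow_pos_of_pos hz _
    nlinarith [norm_nonneg (φ ((γ:ℂ) + (1:ℝ) * I))]
  have hcont : Continuous (fun y : ℝ => φ ((γ : ℂ) + y * I)) := by
    have hc2 : Continuous (fun y : ℝ => ψ ((γ:ℂ) + y * I) + ∑ j, a j / (((γ:ℂ) + y * I) - (d j : ℂ))) := by
      apply Continuous.add
      · have hl : Continuous (fun y : ℝ => (γ:ℂ) + y * I) := by continuity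
        refine continuous_iff_continuousAt.mpr fun y => ContinuousAt.comp (g := ψ)
          (f := fun y : ℝ => (γ:ℂ) + y * I) ?_ hl.continuousAt
        exact (hψ _ (hre y).ge ((hre y).le.trans hγc.le)).continuousAt
      · apply continuous_finset_sum
        intro j _
        apply Continuous.div continuous_const
        · continuity
        · intro y
          exact sub_ne_zero.mpr (hne y j)
    exact hc2.congr fun y => (hφψ _ (hre y).ge ((hre y).le.trans hγc.le) (hne y)).symm
  have hmeas := hcont.aestronglyMeasurable (μ := volume)
  have htail : ∀ y : ℝ, 1 ≤ |y| → ‖φ ((γ:ℂ) + y * I)‖ ≤ C * |y| ^ (-r) := by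
    intro y hy
    have h := hdecay ((γ:ℂ) + y * I) (hre y).ge ((hre y).le.trans hγc.le) (by rw [him]; exact hy)
    refine h.trans (mul_le_mul_of_nonneg_left ?_ hC0)
    apply Real.rpow_le_rpow_of_nonpos (by linarith)
    · calc |y| = |((γ:ℂ) + y * I).im| := by rw [him]
        _ ≤ ‖(γ:ℂ) + y * I‖ := Complex.abs_im_le_norm _
    · linarith
  have hIcc : IntegrableOn (fun y : ℝ => φ ((γ : ℂ) + y * I)) (Icc (-1) 1) :=
    hcont.continuousOn.integrableOn_Icc
  have hIoi : IntegrableOn (fun y : ℝ => φ ((γ : ℂ) + y * I)) (Ioi 1) := by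
    have hmaj : IntegrableOn (fun y : ℝ => C * y ^ (-r)) (Ioi 1) :=
      (integrableOn_Ioi_rpow_of_lt (by linarith) one_pos).const_mul C
    refine Integrable.mono' hmaj hmeas.restrict ?_
    filter_upwards [ae_restrict_mem measurableSet_Ioi] with y hy
    have h1y : (1:ℝ) ≤ |y| := by rw [abs_of_pos (by linarith [mem_Ioi.mp hy])]; exact (mem_Ioi.mp hy).le
    have := htail y h1y
    rwa [abs_of_pos (by linarith [mem_Ioi.mp hy])] at this
  have hIic : IntegrableOn (fun y : ℝ => φ ((γ : ℂ) + y * I)) (Iic (-1)) := by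
    have key : IntegrableOn ((fun y : ℝ => φ ((γ : ℂ) + y * I)) ∘ (fun y : ℝ => -y)) (Ici 1) := by
      have hmaj : IntegrableOn (fun y : ℝ => C * y ^ (-r)) (Ici 1) := by
        rw [integrableOn_Ici_iff_integrableOn_Ioi]
        exact (integrableOn_Ioi_rpow_of_lt (by linarith) one_pos).const_mul C
      refine Integrable.mono' hmaj ((hcont.comp continuous_neg).aestronglyMeasurable).restrict ?_
      filter_upwards [ae_restrict_mem measurableSet_Ici] with y hy
      have hy1 := mem_Ici.mp hy
      have h1y : (1:ℝ) ≤ |(-y)| := by rw [abs_neg, abs_of_pos (by linarith)]; exact hy1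
      have := htail (-y) h1y
      rwa [abs_neg, abs_of_pos (by linarith)] at this
    have hiff := MeasurePreserving.integrableOn_comp_preimage
      (Measure.measurePreserving_neg (volume : Measure ℝ))
      (Homeomorph.neg ℝ).measurableEmbedding
      (f := fun y : ℝ => φ ((γ : ℂ) + y * I)) (s := Iic (-1))
    rw [← hiff]
    have hpre : (Neg.neg : ℝ → ℝ) ⁻¹' (Iic (-1)) = Ici 1 := by
      ext x; simp [neg_le]
    rw [hpre]
    exact key
  have hint : Integrable (fun y : ℝ => φ ((γ : ℂ) + y * I)) := by
    rw [← integrableOn_univ]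
    have : (univ : Set ℝ) = Iic (-1) ∪ (Icc (-1) 1 ∪ Ioi 1) := by
      ext x
      simp only [mem_univ, mem_union, mem_Iic, mem_Icc, mem_Ioi, true_iff]
      rcases le_or_gt x (-1) with h | h
      · exact Or.inl h
      · rcases le_or_gt x 1 with h' | h'
        · exact Or.inr (Or.inl ⟨h.le, h'⟩)
        · exact Or.inr (Or.inr h')
    rw [this]
    exact hIic.union (hIcc.union hIoi)
  exact ⟨hint, hC0⟩

private lemma mellin_core
    (φ ψ : ℂ → ℂ) (m : ℕ) (d : Fin m → ℝ) (a : Fin m → ℂ)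
    (γ c : ℝ) (hγc : γ < c) (hd : ∀ j, γ < d j ∧ d j < c)
    (hψ : ∀ z : ℂ, γ ≤ z.re → z.re ≤ c → AnalyticAt ℂ ψ z)
    (hφψ : ∀ z : ℂ, γ ≤ z.re → z.re ≤ c → (∀ j, z ≠ (d j : ℂ)) →
      φ z = ψ z + ∑ j, a j / (z - (d j : ℂ)))
    (r : ℝ) (hr : 1 < r) (C : ℝ) (hC0 : 0 ≤ C)
    (hdecay : ∀ z : ℂ, γ ≤ z.re → z.re ≤ c → 1 ≤ |z.im| →
      ‖φ z‖ ≤ C * ‖z‖ ^ (-r))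
    (t : ℝ) (ht0 : 0 < t) (ht1 : t < 1)
    (hintc : Integrable fun y : ℝ =>
      φ ((c : ℂ) + y * I) * (t : ℂ) ^ (-((c : ℂ) + y * I)))
    (hφγ_int : Integrable (fun y : ℝ => φ ((γ : ℂ) + y * I))) :
    (∫ y : ℝ, φ ((c : ℂ) + y * I) * (t : ℂ) ^ (-((c : ℂ) + y * I)))
      = (∫ y : ℝ, φ ((γ : ℂ) + y * I) * (t : ℂ) ^ (-((γ : ℂ) + y * I)))
        + ((2 * Real.pi : ℝ) : ℂ) * ∑ j, a j * (t : ℂ) ^ (-((d j : ℝ) : ℂ)) := by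
  have htne : (t : ℂ) ≠ 0 := by
    simp only [ne_eq, ofReal_eq_zero]
    exact ht0.ne'
  set u : ℂ → ℂ := fun z => (t : ℂ) ^ (-z) with hu_def
  have hu : Differentiable ℂ u := fun z =>
    DifferentiableAt.const_cpow (differentiable_id.neg z) (Or.inl htne)
  have hucont : Continuous u := hu.continuous
  have hgdiff : ∀ j : Fin m, Differentiable ℂ (dslope u ((d j : ℂ))) := fun j =>
    differentiableOn_univ.mp
      ((Complex.differentiableOn_dslope (Filter.univ_mem)).mpr hu.differentiableOn)
  set H : ℂ → ℂ := fun z => ψ z * u z + ∑ j, a j * dslope u ((d j : ℂ)) z with hH_def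
  have hHdiff : ∀ z : ℂ, γ ≤ z.re → z.re ≤ c → DifferentiableAt ℂ H z := by
    intro z h1 h2
    exact (((hψ z h1 h2).differentiableAt).mul (hu z)).add
      (DifferentiableAt.fun_sum fun j _ => ((hgdiff j) z).const_mul (a j))
  have hHline : ∀ z : ℂ, γ ≤ z.re → z.re ≤ c → (∀ j, z ≠ (d j : ℂ)) →
      H z = φ z * u z - ∑ j, a j * u ((d j : ℂ)) * (z - (d j : ℂ))⁻¹ := by
    intro z h1 h2 h3
    have hterm : ∀ j : Fin m, a j * dslope u ((d j : ℂ)) z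
        = a j / (z - (d j : ℂ)) * u z - a j * u ((d j : ℂ)) * (z - (d j : ℂ))⁻¹ := by
      intro j
      rw [dslope_of_ne _ (h3 j), slope_def_field]
      have hzj : (z - (d j : ℂ)) ≠ 0 := sub_ne_zero.mpr (h3 j)
      field_simp
    rw [hH_def]
    simp only
    rw [hφψ z h1 h2 h3, Finset.sum_congr rfl (fun j _ => hterm j), Finset.sum_sub_distrib,
      add_mul, Finset.sum_mul]
    ring
  -- Cauchy's theorem on the rectangle
  have hcauchy : ∀ T : ℝ,
      I • (∫ y in (-T)..T, H ((c : ℂ) + y * I)) - I • (∫ y in (-T)..T, H ((γ : ℂ) + y * I))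
      = (∫ x in γ..c, H ((x : ℂ) + (T : ℂ) * I)) - (∫ x in γ..c, H ((x : ℂ) + ((-T : ℝ) : ℂ) * I)) := by
    intro T
    have hrect := Complex.integral_boundary_rect_eq_zero_of_differentiableOn H
      ((γ : ℂ) - T * I) ((c : ℂ) + T * I) ?_
    · have e1 : ((γ:ℂ) - T * I).re = γ := by simp
      have e2 : ((γ:ℂ) - T * I).im = -T := by simp
      have e3 : ((c:ℂ) + T * I).re = c := by simp
      have e4 : ((c:ℂ) + T * I).im = T := by simp
      rw [e1, e2, e3, e4] at hrect
      push_cast at hrect ⊢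
      simp only [smul_eq_mul] at hrect ⊢
      linear_combination hrect
    · rw [show ((γ:ℂ) - T * I).re = γ by simp, show ((γ:ℂ) - T * I).im = -T by simp,
        show ((c:ℂ) + T * I).re = c by simp, show ((c:ℂ) + T * I).im = T by simp]
      intro z hz
      rw [Complex.mem_reProdIm] at hz
      have hz1 := hz.1
      rw [Set.uIcc_of_le hγc.le] at hz1
      exact (hHdiff z hz1.1 hz1.2).differentiableWithinAt
  -- rewrite the vertical integrals
  have hne_c : ∀ (y : ℝ) (j : Fin m), ((c : ℂ) + y * I) ≠ (d j : ℂ) := by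
    intro y j h
    have := congrArg Complex.re h
    simp at this
    exact absurd this (hd j).2.ne'
  have hne_γ : ∀ (y : ℝ) (j : Fin m), ((γ : ℂ) + y * I) ≠ (d j : ℂ) := by
    intro y j h
    have := congrArg Complex.re h
    simp at this
    exact absurd this (hd j).1.ne
  have hsumcont : ∀ b : ℝ, (∀ j : Fin m, b - d j ≠ 0) → Continuous (fun y : ℝ =>
      ∑ j, a j * u ((d j : ℂ)) * (((b - d j : ℝ) : ℂ) + y * I)⁻¹) := by
    intro b hb
    apply continuous_finset_sum
    intro j _
    apply Continuous.mul continuous_const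
    apply Continuous.inv₀ (continuous_const.add (Complex.continuous_ofReal.mul continuous_const))
    intro y h
    exact hb j (by simpa using congrArg Complex.re h)
  have hVline : ∀ (b : ℝ) (hb : ∀ j : Fin m, b - d j ≠ 0)
      (hbγ : γ ≤ b) (hbc : b ≤ c)
      (hbne : ∀ (y : ℝ) (j : Fin m), ((b : ℂ) + y * I) ≠ (d j : ℂ))
      (hbint : Integrable (fun y : ℝ => φ ((b:ℂ) + y*I) * u ((b:ℂ) + y*I))) (T : ℝ),
      (∫ y in (-T)..T, H ((b : ℂ) + y * I))
        = (∫ y in (-T)..T, φ ((b:ℂ) + y*I) * u ((b:ℂ) + y*I))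
          - ∑ j, a j * u ((d j : ℂ)) * ((2 * Real.arctan (T / (b - d j)) : ℝ) : ℂ) := by
    intro b hb hbγ hbc hbne hbint T
    have hre : ∀ y : ℝ, ((b:ℂ) + y * I).re = b := fun y => by simp
    have hcongr : ∀ y ∈ Set.uIcc (-T) T, H ((b:ℂ) + y * I)
        = φ ((b:ℂ) + y*I) * u ((b:ℂ) + y*I)
          - ∑ j, a j * u ((d j : ℂ)) * (((b - d j : ℝ) : ℂ) + y * I)⁻¹ := by
      intro y _
      rw [hHline _ (by rw [hre]; exact hbγ) (by rw [hre]; exact hbc) (hbne y)]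
      congr 1
      apply Finset.sum_congr rfl
      intro j _
      congr 2
      push_cast
      ring
    rw [intervalIntegral.integral_congr hcongr,
      intervalIntegral.integral_sub hbint.intervalIntegrable
        ((hsumcont b hb).intervalIntegrable _ _)]
    congr 1
    rw [intervalIntegral.integral_finset_sum (fun j _ => by
      apply Continuous.intervalIntegrable
      apply Continuous.mul continuous_const
      apply Continuous.inv₀ (continuous_const.add (Complex.continuous_ofReal.mul continuous_const))
      intro y h
      exact hb j (by simpa using congrArg Complex.re h))]
    apply Finset.sum_congr rfl
    intro j _
    rw [intervalIntegral.integral_const_mul, mellin_integral_inv_line (b - d j) (hb j) T]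
    push_cast
    ring
  -- bound for H on horizontal segments
  have hK0nn : (0:ℝ) ≤ (C + ∑ j, ‖a j‖) * t ^ (-c) := by positivity
  have hHbound : ∀ (x T : ℝ), γ ≤ x → x ≤ c → 1 ≤ |T| →
      ‖H ((x:ℂ) + (T:ℂ) * I)‖ ≤ ((C + ∑ j, ‖a j‖) * t ^ (-c)) * |T|⁻¹ := by
    intro x T hx1 hx2 hT
    have hzre : ((x:ℂ) + (T:ℂ) * I).re = x := by simp
    have hzim : ((x:ℂ) + (T:ℂ) * I).im = T := by simp
    have hTne : T ≠ 0 := by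
      intro h
      rw [h] at hT
      simp at hT
      linarith
    have hTpos : (0:ℝ) < |T| := by positivity
    have hzne : ∀ j, ((x:ℂ) + (T:ℂ) * I) ≠ ((d j : ℝ) : ℂ) := by
      intro j h
      have := congrArg Complex.im h
      rw [hzim] at this
      simp at this
      exact hTne this
    rw [hHline _ (by rw [hzre]; exact hx1) (by rw [hzre]; exact hx2) hzne]
    have habs : ∀ w : ℂ, ‖(t:ℂ) ^ w‖ = t ^ w.re := fun w =>
      Complex.norm_cpow_eq_rpow_re_of_pos ht0 w
    have hu_z : ‖u ((x:ℂ) + (T:ℂ) * I)‖ ≤ t ^ (-c) := by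
      rw [hu_def]
      simp only [habs]
      apply Real.rpow_le_rpow_of_exponent_ge ht0 ht1.le
      rw [Complex.neg_re, hzre]
      linarith
    have hud : ∀ j : Fin m, ‖u ((d j : ℝ) : ℂ)‖ ≤ t ^ (-c) := by
      intro j
      rw [hu_def]
      simp only [habs]
      apply Real.rpow_le_rpow_of_exponent_ge ht0 ht1.le
      rw [Complex.neg_re, Complex.ofReal_re]
      exact neg_le_neg (hd j).2.le
    have hφz : ‖φ ((x:ℂ) + (T:ℂ) * I)‖ ≤ C * |T|⁻¹ := by
      refine (hdecay _ (by rw [hzre]; exact hx1) (by rw [hzre]; exact hx2)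
        (by rw [hzim]; exact hT)).trans ?_
      have h1 : ‖(x:ℂ) + (T:ℂ) * I‖ ^ (-r) ≤ |T| ^ (-r) := by
        apply Real.rpow_le_rpow_of_nonpos hTpos ?_ (by linarith)
        calc |T| = |((x:ℂ) + (T:ℂ) * I).im| := by rw [hzim]
          _ ≤ ‖(x:ℂ) + (T:ℂ) * I‖ := Complex.abs_im_le_norm _
      have h2 : |T| ^ (-r) ≤ |T| ^ (-1 : ℝ) := Real.rpow_le_rpow_of_exponent_le hT (by linarith)
      have h3 : |T| ^ (-1:ℝ) = |T|⁻¹ := Real.rpow_neg_one _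
      have := (h1.trans h2).trans_eq h3
      exact mul_le_mul_of_nonneg_left this hC0
    have hinv : ∀ j : Fin m, ‖(((x:ℂ) + (T:ℂ) * I) - ((d j : ℝ):ℂ))⁻¹‖ ≤ |T|⁻¹ := by
      intro j
      rw [norm_inv]
      apply inv_anti₀ hTpos
      calc |T| = |(((x:ℂ) + (T:ℂ) * I) - ((d j : ℝ):ℂ)).im| := by
            rw [Complex.sub_im, hzim, Complex.ofReal_im, sub_zero]
        _ ≤ ‖_‖ := Complex.abs_im_le_norm _
    calc ‖φ ((x:ℂ) + (T:ℂ) * I) * u ((x:ℂ) + (T:ℂ) * I)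
          - ∑ j, a j * u ((d j : ℝ):ℂ) * (((x:ℂ) + (T:ℂ) * I) - ((d j:ℝ):ℂ))⁻¹‖
        ≤ ‖φ ((x:ℂ) + (T:ℂ) * I) * u ((x:ℂ) + (T:ℂ) * I)‖
          + ‖∑ j, a j * u ((d j : ℝ):ℂ) * (((x:ℂ) + (T:ℂ) * I) - ((d j:ℝ):ℂ))⁻¹‖ :=
          norm_sub_le _ _
      _ ≤ ‖φ ((x:ℂ) + (T:ℂ) * I)‖ * ‖u ((x:ℂ) + (T:ℂ) * I)‖
          + ∑ j, ‖a j‖ * ‖u ((d j : ℝ):ℂ)‖ * ‖(((x:ℂ) + (T:ℂ) * I) - ((d j:ℝ):ℂ))⁻¹‖ := by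
          apply add_le_add
          · exact (norm_mul _ _).le
          · refine (norm_sum_le _ _).trans (le_of_eq ?_)
            apply Finset.sum_congr rfl
            intro j _
            rw [norm_mul, norm_mul]
      _ ≤ (C * |T|⁻¹) * t ^ (-c) + ∑ j, ‖a j‖ * t ^ (-c) * |T|⁻¹ := by
          refine add_le_add (mul_le_mul hφz hu_z (norm_nonneg _)
            (mul_nonneg hC0 (by positivity))) (Finset.sum_le_sum fun j _ => ?_)
          exact mul_le_mul (mul_le_mul_of_nonneg_left (hud j) (norm_nonneg _)) (hinv j)
            (norm_nonneg _) (mul_nonneg (norm_nonneg _) (Real.rpow_nonneg ht0.le _))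
      _ = ((C + ∑ j, ‖a j‖) * t ^ (-c)) * |T|⁻¹ := by
          rw [← Finset.sum_mul, ← Finset.sum_mul]
          ring
  have hHoriz : ∀ T : ℝ, 1 ≤ |T| →
      ‖∫ x in γ..c, H ((x:ℂ) + (T:ℂ) * I)‖
        ≤ (((C + ∑ j, ‖a j‖) * t ^ (-c)) * |T|⁻¹) * |c - γ| := by
    intro T hT
    apply intervalIntegral.norm_integral_le_of_norm_le_const
    intro x hx
    rw [Set.uIoc_of_le hγc.le] at hx
    exact hHbound x T hx.1.le hx.2 hT
  have hinvlim : Tendsto (fun T : ℝ => (((C + ∑ j, ‖a j‖) * t ^ (-c)) * |T|⁻¹) * |c - γ|)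
      atTop (nhds 0) := by
    have h1 : Tendsto (fun T : ℝ => |T|⁻¹) atTop (nhds 0) :=
      tendsto_inv_atTop_zero.comp tendsto_abs_atTop_atTop
    have := (h1.const_mul ((C + ∑ j, ‖a j‖) * t ^ (-c))).mul_const |c - γ|
    simpa using this
  have hhorizlim : Tendsto (fun T : ℝ => (∫ x in γ..c, H ((x:ℂ) + (T:ℂ) * I))
      - (∫ x in γ..c, H ((x:ℂ) + ((-T : ℝ):ℂ) * I))) atTop (nhds 0) := by
    have htop : Tendsto (fun T : ℝ => ∫ x in γ..c, H ((x:ℂ) + (T:ℂ) * I)) atTop (nhds 0) := by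
      apply squeeze_zero_norm' _ hinvlim
      filter_upwards [eventually_ge_atTop (1:ℝ)] with T hT
      exact hHoriz T (by rw [abs_of_pos (by linarith)]; exact hT)
    have hbot : Tendsto (fun T : ℝ => ∫ x in γ..c, H ((x:ℂ) + ((-T : ℝ):ℂ) * I)) atTop (nhds 0) := by
      apply squeeze_zero_norm' _ hinvlim
      filter_upwards [eventually_ge_atTop (1:ℝ)] with T hT
      have := hHoriz (-T) (by rw [abs_neg, abs_of_pos (by linarith)]; exact hT)
      rwa [abs_neg] at this
    simpa using htop.sub hbot
  -- integrability on the γ-line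
  have habs : ∀ w : ℂ, ‖(t:ℂ) ^ w‖ = t ^ w.re := fun w =>
    Complex.norm_cpow_eq_rpow_re_of_pos ht0 w
  have hulineγ : Continuous (fun y : ℝ => u ((γ:ℂ) + y * I)) :=
    hucont.comp (continuous_const.add (Complex.continuous_ofReal.mul continuous_const))
  have hFγint : Integrable (fun y : ℝ => φ ((γ:ℂ) + y * I) * u ((γ:ℂ) + y * I)) := by
    have hbd : ∀ y : ℝ, ‖u ((γ:ℂ) + y * I)‖ ≤ t ^ (-γ : ℝ) := by
      intro y
      rw [hu_def]
      simp only [habs]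
      apply le_of_eq
      congr 1
      simp
    have := Integrable.bdd_mul hφγ_int hulineγ.aestronglyMeasurable (Filter.Eventually.of_forall hbd)
    exact this.congr (Filter.Eventually.of_forall fun y => mul_comm _ _)
  -- limits of vertical integrals
  have hIcLim : Tendsto (fun T : ℝ => ∫ y in (-T)..T, φ ((c:ℂ) + y*I) * u ((c:ℂ) + y*I)) atTop
      (nhds (∫ y : ℝ, φ ((c:ℂ) + y*I) * u ((c:ℂ) + y*I))) :=
    intervalIntegral_tendsto_integral hintc tendsto_neg_atTop_atBot tendsto_id
  have hIγLim : Tendsto (fun T : ℝ => ∫ y in (-T)..T, φ ((γ:ℂ) + y*I) * u ((γ:ℂ) + y*I)) atTop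
      (nhds (∫ y : ℝ, φ ((γ:ℂ) + y*I) * u ((γ:ℂ) + y*I))) :=
    intervalIntegral_tendsto_integral hFγint tendsto_neg_atTop_atBot tendsto_id
  -- limits of the arctan sums
  have hScLim : Tendsto (fun T : ℝ =>
      ∑ j, a j * u ((d j : ℝ):ℂ) * ((2 * Real.arctan (T / (c - d j)) : ℝ) : ℂ)) atTop
      (nhds (∑ j, a j * u ((d j : ℝ):ℂ) * ((Real.pi : ℝ) : ℂ))) := by
    apply tendsto_finset_sum
    intro j _
    have hb : 0 < c - d j := sub_pos.mpr (hd j).2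
    have h1 := (mellin_arctan_lim_pos hb).const_mul (2:ℝ)
    rw [show (2:ℝ) * (Real.pi / 2) = Real.pi by ring] at h1
    have h2 : Tendsto (fun T : ℝ => ((2 * Real.arctan (T / (c - d j)) : ℝ) : ℂ)) atTop
        (nhds ((Real.pi : ℝ) : ℂ)) :=
      (Complex.continuous_ofReal.tendsto Real.pi).comp h1
    exact h2.const_mul _
  have hSγLim : Tendsto (fun T : ℝ =>
      ∑ j, a j * u ((d j : ℝ):ℂ) * ((2 * Real.arctan (T / (γ - d j)) : ℝ) : ℂ)) atTop
      (nhds (∑ j, a j * u ((d j : ℝ):ℂ) * ((-Real.pi : ℝ) : ℂ))) := by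
    apply tendsto_finset_sum
    intro j _
    have hb : γ - d j < 0 := sub_neg.mpr (hd j).1
    have h1 := (mellin_arctan_lim_neg hb).const_mul (2:ℝ)
    rw [show (2:ℝ) * -(Real.pi / 2) = -Real.pi by ring] at h1
    have h2 : Tendsto (fun T : ℝ => ((2 * Real.arctan (T / (γ - d j)) : ℝ) : ℂ)) atTop
        (nhds ((-Real.pi : ℝ) : ℂ)) :=
      (Complex.continuous_ofReal.tendsto (-Real.pi)).comp h1
    exact h2.const_mul _
  -- the function in the Cauchy identity
  have hbc : ∀ j : Fin m, c - d j ≠ 0 := fun j => (sub_pos.mpr (hd j).2).ne'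
  have hbγ : ∀ j : Fin m, γ - d j ≠ 0 := fun j => (sub_neg.mpr (hd j).1).ne
  have hfun : (fun T : ℝ =>
        I • (∫ y in (-T)..T, H ((c : ℂ) + y * I)) - I • (∫ y in (-T)..T, H ((γ : ℂ) + y * I)))
      = fun T : ℝ =>
        I • ((∫ y in (-T)..T, φ ((c:ℂ) + y*I) * u ((c:ℂ) + y*I))
          - ∑ j, a j * u ((d j : ℝ):ℂ) * ((2 * Real.arctan (T / (c - d j)) : ℝ) : ℂ))
        - I • ((∫ y in (-T)..T, φ ((γ:ℂ) + y*I) * u ((γ:ℂ) + y*I))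
          - ∑ j, a j * u ((d j : ℝ):ℂ) * ((2 * Real.arctan (T / (γ - d j)) : ℝ) : ℂ)) := by
    funext T
    rw [hVline c hbc hγc.le le_rfl hne_c hintc T, hVline γ hbγ le_rfl hγc.le hne_γ hFγint T]
  have hlim1 : Tendsto (fun T : ℝ =>
      I • (∫ y in (-T)..T, H ((c : ℂ) + y * I)) - I • (∫ y in (-T)..T, H ((γ : ℂ) + y * I)))
      atTop (nhds (I • ((∫ y : ℝ, φ ((c:ℂ) + y*I) * u ((c:ℂ) + y*I))
          - ∑ j, a j * u ((d j : ℝ):ℂ) * ((Real.pi : ℝ) : ℂ))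
        - I • ((∫ y : ℝ, φ ((γ:ℂ) + y*I) * u ((γ:ℂ) + y*I))
          - ∑ j, a j * u ((d j : ℝ):ℂ) * ((-Real.pi : ℝ) : ℂ)))) := by
    rw [hfun]
    exact ((hIcLim.sub hScLim).const_smul I).sub ((hIγLim.sub hSγLim).const_smul I)
  have hlim2 : Tendsto (fun T : ℝ =>
      I • (∫ y in (-T)..T, H ((c : ℂ) + y * I)) - I • (∫ y in (-T)..T, H ((γ : ℂ) + y * I)))
      atTop (nhds 0) := by
    have : (fun T : ℝ =>
        I • (∫ y in (-T)..T, H ((c : ℂ) + y * I)) - I • (∫ y in (-T)..T, H ((γ : ℂ) + y * I)))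
        = fun T : ℝ => (∫ x in γ..c, H ((x:ℂ) + (T:ℂ) * I))
          - (∫ x in γ..c, H ((x:ℂ) + ((-T : ℝ):ℂ) * I)) := funext hcauchy
    rw [this]
    exact hhorizlim
  have hkey0 := tendsto_nhds_unique hlim1 hlim2
  -- extract the identity
  have hX : ((∫ y : ℝ, φ ((c:ℂ) + y*I) * u ((c:ℂ) + y*I))
        - ∑ j, a j * u ((d j : ℝ):ℂ) * ((Real.pi : ℝ) : ℂ))
      - ((∫ y : ℝ, φ ((γ:ℂ) + y*I) * u ((γ:ℂ) + y*I))
        - ∑ j, a j * u ((d j : ℝ):ℂ) * ((-Real.pi : ℝ) : ℂ)) = 0 := by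
    simp only [smul_eq_mul] at hkey0
    have hI : (I : ℂ) ≠ 0 := Complex.I_ne_zero
    apply mul_left_cancel₀ hI
    rw [mul_zero]
    linear_combination hkey0
  have hgoal : (∫ y : ℝ, φ ((c:ℂ) + y*I) * u ((c:ℂ) + y*I))
      = (∫ y : ℝ, φ ((γ:ℂ) + y*I) * u ((γ:ℂ) + y*I))
        + ((2 * Real.pi : ℝ) : ℂ) * ∑ j, a j * u ((d j : ℝ):ℂ) := by
    have hsum : (∑ j, a j * u ((d j : ℝ):ℂ) * ((Real.pi : ℝ) : ℂ))
        - (∑ j, a j * u ((d j : ℝ):ℂ) * ((-Real.pi : ℝ) : ℂ))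
        = ((2 * Real.pi : ℝ) : ℂ) * ∑ j, a j * u ((d j : ℝ):ℂ) := by
      rw [← Finset.sum_sub_distrib, Finset.mul_sum]
      apply Finset.sum_congr rfl
      intro j _
      push_cast
      ring
    linear_combination hX + hsum
  exact hgoal

/-- Inverse Mellin mapping theorem (simple-pole case): if `φ` is holomorphic on
`Re z > α`, extends meromorphically to the strip `γ ≤ Re z ≤ c` as `ψ + ∑_j a_j/(z-d_j)`
with `ψ` holomorphic there, simple poles `d_1 > ... > d_m` in `(γ, c)`, and
`φ(z) = O(|z|^{-r})` in the strip for some `r > 1`, then the absolutely convergent inverse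
Mellin transform `f(t) = (1/2πi) ∫_{Re z = c} φ(z) t^{-z} dz` satisfies
`f(t) = ∑_j a_j t^{-d_j} + O(t^{-γ})` as `t → 0⁺`. -/
theorem inverse_mellin_mapping_simple_poles
    (φ ψ : ℂ → ℂ) (m : ℕ) (d : Fin m → ℝ) (a : Fin m → ℂ)
    (γ c : ℝ) (hγc : γ < c) (hd : ∀ j, γ < d j ∧ d j < c) (hmono : StrictAnti d)
    (hψ : ∀ z : ℂ, γ ≤ z.re → z.re ≤ c → AnalyticAt ℂ ψ z)
    (hφψ : ∀ z : ℂ, γ ≤ z.re → z.re ≤ c → (∀ j, z ≠ (d j : ℂ)) →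
      φ z = ψ z + ∑ j, a j / (z - (d j : ℂ)))
    (r : ℝ) (hr : 1 < r) (C : ℝ)
    (hdecay : ∀ z : ℂ, γ ≤ z.re → z.re ≤ c → 1 ≤ |z.im| →
      ‖φ z‖ ≤ C * ‖z‖ ^ (-r))
    (hint : ∀ t : ℝ, 0 < t → Integrable fun y : ℝ =>
      φ ((c : ℂ) + y * Complex.I) * (t : ℂ) ^ (-((c : ℂ) + y * Complex.I)))
    (f : ℝ → ℂ)
    (hf : ∀ t : ℝ, 0 < t → f t = (1 / (2 * Real.pi)) •
      ∫ y : ℝ, φ ((c : ℂ) + y * Complex.I) * (t : ℂ) ^ (-((c : ℂ) + y * Complex.I))) :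
    ∃ C' : ℝ, ∀ t : ℝ, 0 < t → t < 1 →
      ‖f t - ∑ j, a j * (t : ℂ) ^ (-(d j : ℂ))‖ ≤ C' * t ^ (-γ) := by
  obtain ⟨hφγ_int, hC0⟩ := mellin_setup φ ψ m d a γ c hγc hd hψ hφψ r hr C hdecay
  refine ⟨(1 / (2 * Real.pi)) * ∫ y : ℝ, ‖φ ((γ : ℂ) + y * Complex.I)‖, ?_⟩
  intro t ht0 ht1
  have hkey := mellin_core φ ψ m d a γ c hγc hd hψ hφψ r hr C hC0 hdecay t ht0 ht1
    (hint t ht0) hφγ_int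
  rw [hf t ht0, hkey]
  have hπ : (0:ℝ) < Real.pi := Real.pi_pos
  have habs : ∀ w : ℂ, ‖(t:ℂ) ^ w‖ = t ^ w.re := fun w =>
    Complex.norm_cpow_eq_rpow_re_of_pos ht0 w
  have hsimp : (1 / (2 * Real.pi)) •
        ((∫ y : ℝ, φ ((γ:ℂ) + y * Complex.I) * (t:ℂ) ^ (-((γ:ℂ) + y * Complex.I)))
          + ((2 * Real.pi : ℝ) : ℂ) * ∑ j, a j * (t:ℂ) ^ (-((d j : ℝ):ℂ)))
        - ∑ j, a j * (t:ℂ) ^ (-((d j : ℝ):ℂ))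
      = (1 / (2 * Real.pi)) •
        (∫ y : ℝ, φ ((γ:ℂ) + y * Complex.I) * (t:ℂ) ^ (-((γ:ℂ) + y * Complex.I))) := by
    rw [smul_add]
    have h2 : (1 / (2 * Real.pi)) • (((2 * Real.pi : ℝ) : ℂ)
          * ∑ j, a j * (t:ℂ) ^ (-((d j : ℝ):ℂ)))
        = ∑ j, a j * (t:ℂ) ^ (-((d j : ℝ):ℂ)) := by
      rw [Complex.real_smul]
      push_cast
      have : ((Real.pi : ℂ)) ≠ 0 := by
        simp only [ne_eq, Complex.ofReal_eq_zero]
        exact hπ.ne'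
      field_simp
    rw [h2]
    abel
  rw [hsimp, norm_smul]
  have h1 : ‖∫ y : ℝ, φ ((γ:ℂ) + y * Complex.I) * (t:ℂ) ^ (-((γ:ℂ) + y * Complex.I))‖
      ≤ (∫ y : ℝ, ‖φ ((γ : ℂ) + y * Complex.I)‖) * t ^ (-γ) := by
    calc ‖∫ y : ℝ, φ ((γ:ℂ) + y * Complex.I) * (t:ℂ) ^ (-((γ:ℂ) + y * Complex.I))‖
        ≤ ∫ y : ℝ, ‖φ ((γ:ℂ) + y * Complex.I) * (t:ℂ) ^ (-((γ:ℂ) + y * Complex.I))‖ :=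
          norm_integral_le_integral_norm _
      _ = ∫ y : ℝ, ‖φ ((γ:ℂ) + y * Complex.I)‖ * t ^ (-γ) := by
          congr 1
          funext y
          rw [norm_mul]
          congr 1
          rw [habs]
          congr 1
          simp
      _ = (∫ y : ℝ, ‖φ ((γ : ℂ) + y * Complex.I)‖) * t ^ (-γ) := by
          rw [integral_mul_const]
  have hnn : (0:ℝ) ≤ 1 / (2 * Real.pi) := by positivity
  calc ‖(1 / (2 * Real.pi) : ℝ)‖ *
        ‖∫ y : ℝ, φ ((γ:ℂ) + y * Complex.I) * (t:ℂ) ^ (-((γ:ℂ) + y * Complex.I))‖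
      ≤ (1 / (2 * Real.pi)) * ((∫ y : ℝ, ‖φ ((γ : ℂ) + y * Complex.I)‖) * t ^ (-γ)) := by
        rw [Real.norm_eq_abs, _root_.abs_of_nonneg hnn]
        exact mul_le_mul_of_nonneg_left h1 hnn
    _ = (1 / (2 * Real.pi)) * (∫ y : ℝ, ‖φ ((γ : ℂ) + y * Complex.I)‖) * t ^ (-γ) := by
        ring

end MellinAux
end
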